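/- arXiv:2210.11079 — 2 statements merged into one kernel-verified Lean document; each statement's English description precedes it below -/
import Mathlib

section
/- Suppose a sequence of sequential tests satisfies E_0[T_n] ≤ n, the binary data-processing bound α_n log(α_n/(1-β_n)) + (1-α_n) log((1-α_n)/β_n) ≤ E_0[S_{T_n}], the optional-stopping bound E_0[S_{T_n}] ≤ D · E_0[T_n] for a constant D > 0, and α_n → 0. Then limsup_{n→∞} (1/n) log(1/β_n) ≤ D. -/
open Filter Real Topology

/-! Write `h` for the binary entropy. Dropping the nonnegative term `-αₙ log (1 - βₙ)`,
the data-processing bound rearranges to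
`(1 - αₙ) log (1/βₙ) ≤ E₀[S_{Tₙ}] + h(αₙ) ≤ D n + h(αₙ)`, i.e.
`(1/n) log (1/βₙ) ≤ (D + h(αₙ)/n) / (1 - αₙ)`, and the right-hand side tends to `D`
because `h(αₙ) → h(0) = 0` and `1 - αₙ → 1`. -/

theorem one_sub_mul_log_one_div_le_add_binEntropy {a b : ℝ}
    (ha : a ∈ Set.Ioo 0 1) (hb : b ∈ Set.Ioo 0 1) :
    (1 - a) * log (1 / b) ≤
      a * log (a / (1 - b)) + (1 - a) * log ((1 - a) / b) + binEntropy a := by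
  obtain ⟨ha₀, ha₁⟩ := ha
  obtain ⟨hb₀, hb₁⟩ := hb
  have hlog : a * log (1 - b) ≤ 0 :=
    mul_nonpos_of_nonneg_of_nonpos ha₀.le (log_nonpos (by linarith) (by linarith))
  rw [log_div (x := a) ha₀.ne' (by linarith), log_div (x := 1 - a) (by linarith) hb₀.ne',
    one_div, log_inv, binEntropy, log_inv, log_inv]
  linarith

theorem one_div_mul_le_div_one_sub {a L c e n : ℝ} (ha : a < 1) (hn : 0 < n)
    (h : (1 - a) * L ≤ c * n + e) :
    1 / n * L ≤ (c + e / n) / (1 - a) := by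
  rw [le_div_iff₀ (sub_pos.2 ha)]
  calc 1 / n * L * (1 - a) = (1 - a) * L / n := by ring
    _ ≤ (c * n + e) / n := by gcongr
    _ = c + e / n := by field_simp

theorem tendsto_add_binEntropy_div_div_one_sub {α : ℕ → ℝ} (hα : Tendsto α atTop (𝓝 0))
    (D : ℝ) :
    Tendsto (fun n : ℕ => (D + binEntropy (α n) / n) / (1 - α n)) atTop (𝓝 D) := by
  have hh : Tendsto (fun n => binEntropy (α n)) atTop (𝓝 0) := by
    simpa [Function.comp_def] using (binEntropy_continuous.tendsto 0).comp hα
  have hnum := tendsto_const_nhds (x := D).add (hh.div_atTop tendsto_natCast_atTop_atTop)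
  simpa [Pi.div_def] using hnum.div (tendsto_const_nhds (x := (1 : ℝ)).sub hα) (by norm_num)

theorem limsup_le_of_eventually_le_of_tendsto {ι : Type*} {f : Filter ι} [f.NeBot]
    {u v : ι → ℝ} {D : ℝ} (hu : IsCoboundedUnder (· ≤ ·) f u) (huv : u ≤ᶠ[f] v)
    (hv : Tendsto v f (𝓝 D)) :
    limsup u f ≤ D :=
  (limsup_le_limsup huv hu hv.isBoundedUnder_le).trans_eq hv.limsup_eq

/-- Algebraic core of the converse under the expectation constraint:
if `E₀[Tₙ] ≤ n`, the binary data-processing bound holds, the optional-stopping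
bound `E₀[S_{Tₙ}] ≤ D·E₀[Tₙ]` holds for `D > 0`, and `αₙ → 0`, then
`limsup (1/n)·log(1/βₙ) ≤ D`. Here `ET n` models `E₀[Tₙ]` and `ES n` models
`E₀[S_{Tₙ}]`. -/
theorem stmt5 (α β ET ES : ℕ → ℝ) (D : ℝ) (hD : 0 < D)
    (hα : ∀ n, α n ∈ Set.Ioo (0:ℝ) 1) (hβ : ∀ n, β n ∈ Set.Ioo (0:ℝ) 1)
    (hT : ∀ n, ET n ≤ n)
    (hdpi : ∀ n, α n * Real.log (α n / (1 - β n))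
        + (1 - α n) * Real.log ((1 - α n) / β n) ≤ ES n)
    (host : ∀ n, ES n ≤ D * ET n)
    (hα0 : Tendsto α atTop (nhds 0)) :
    Filter.limsup (fun n : ℕ => (1 / (n : ℝ)) * Real.log (1 / β n)) atTop ≤ D := by
  have hES (n : ℕ) : ES n ≤ D * n := (host n).trans (by gcongr; exact hT n)
  have hrate : ∀ᶠ n : ℕ in atTop,
      1 / (n : ℝ) * log (1 / β n) ≤ (D + binEntropy (α n) / n) / (1 - α n) := by
    filter_upwards [eventually_gt_atTop 0] with n hn
    refine one_div_mul_le_div_one_sub (hα n).2 (by exact_mod_cast hn) ?_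
    linarith [one_sub_mul_log_one_div_le_add_binEntropy (hα n) (hβ n), hdpi n, hES n]
  have hnonneg (n : ℕ) : 0 ≤ 1 / (n : ℝ) * log (1 / β n) := by
    have : 1 ≤ 1 / β n := one_le_one_div (hβ n).1 (hβ n).2.le
    exact mul_nonneg (by positivity) (log_nonneg this)
  exact limsup_le_of_eventually_le_of_tendsto
    (isCoboundedUnder_le_of_le atTop hnonneg) hrate
    (tendsto_add_binEntropy_div_div_one_sub hα0 D)
end

section
/- For i.i.d. classical samples with per-sample relative entropy D = D(P_0∥P_1) > 0 and bounded log-likelihood ratios, the SPRT with thresholds A_n = n(D' - τ) and B_n = n(D - τ) (where D' = D(P_1∥P_0), 0 < τ < min(D, D')) satisfies: E_0[T_n] < n and E_1[T_n] < n for all sufficiently large n, while α_n ≤ e^{-A_n} and β_n ≤ e^{-B_n}. Hence the exponent pair (D(P_1∥P_0) - τ, D(P_0∥P_1) - τ) is achievable under the expectation constraint for every τ > 0. -/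
open MeasureTheory ProbabilityTheory Real
open scoped NNReal ENNReal

/-!
Error probabilities: split the event `{S_T ≤ -A}` according to the value `k` of the exit time.
Each piece is determined by the first `k` samples, and on it the likelihood ratio
`dP₀/dP₁ = e^{S_k}` is at most `e^{-A}`; summing over the cylinders gives
`P₀(S_T ≤ -A) ≤ e^{-A} P₁(S_T ≤ -A) ≤ e^{-A}`. Exchanging `P₀, P₁` (and `S, -S`)
bounds `P₁(S_T ≥ B)`.

Expected sample size: before exiting, `S_k < n (D - τ)`, whereas under `P₀` the walk has drift `D`.
By Hoeffding's inequality `P₀(S_k ≤ k (D - τ/2)) ≤ r^k` for some `r < 1`, so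
`P₀(T > k) ≤ r^k` as soon as `k ≥ n ρ` with `ρ = (D - τ)/(D - τ/2) < 1`, and
`E₀[T] = ∑ₖ P₀(T > k) ≤ n ρ + O(1) < n` for large `n`. The same holds under `P₁`.
-/

lemma measurable_sInf_setOf_nat {Ω : Type*} [MeasurableSpace Ω] {p : Ω → ℕ → Prop}
    (hp : ∀ k, MeasurableSet {ω | p ω k}) : Measurable fun ω => sInf {k | p ω k} := by
  classical
  set q : Ω → ℕ → Prop := fun ω k => p ω k ∨ ∀ j, ¬ p ω j
  have hq : ∀ ω, ∃ k, q ω k := fun ω => by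
    by_cases h : ∃ k, p ω k
    · exact h.imp fun _ => Or.inl
    · exact ⟨0, Or.inr (not_exists.1 h)⟩
  have heq : (fun ω => sInf {k | p ω k}) = fun ω => Nat.find (hq ω) := by
    ext ω
    by_cases h : ∃ k, p ω k
    · exact le_antisymm (Nat.sInf_le ((Nat.find_spec (hq ω)).resolve_right (not_forall_not.2 h)))
        (Nat.find_min' _ (Or.inl (Nat.sInf_mem h)))
    · have hempty : {k | p ω k} = ∅ := Set.eq_empty_of_forall_notMem (not_exists.1 h)
      rw [(Nat.find_eq_zero (hq ω)).2 (Or.inr (not_exists.1 h)), hempty, Nat.sInf_empty]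
  rw [heq]
  refine measurable_find hq fun k => ?_
  have : {ω | q ω k} = {ω | p ω k} ∪ ⋂ j, {ω | p ω j}ᶜ := by ext; simp [q]
  exact this ▸ (hp k).union (MeasurableSet.iInter fun j => (hp j).compl)

section ExitTime

variable {Ω : Type*}

-- `0` when the walk never leaves `(-a, b)`, since `sInf ∅ = 0`.
noncomputable def exitTime (S : ℕ → Ω → ℝ) (a b : ℝ) (ω : Ω) : ℕ :=
  sInf {k | 1 ≤ k ∧ (S k ω ≤ -a ∨ b ≤ S k ω)}

variable {S : ℕ → Ω → ℝ} {a b : ℝ}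

lemma measurable_exitTime [MeasurableSpace Ω] (hS : ∀ k, Measurable (S k)) :
    Measurable (exitTime S a b) :=
  measurable_sInf_setOf_nat fun k => (MeasurableSet.const _).inter
    ((measurableSet_le (hS k) measurable_const).union (measurableSet_le measurable_const (hS k)))

lemma exitTime_neg : exitTime (fun k ω => -S k ω) b a = exitTime S a b := by
  ext ω
  simp only [exitTime, neg_le_neg_iff, le_neg (a := a), or_comm]

lemma mem_Ioo_of_lt_exitTime {k : ℕ} {ω : Ω} (hk : 1 ≤ k) (hT : k < exitTime S a b ω) :
    S k ω ∈ Set.Ioo (-a) b := by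
  have := Nat.notMem_of_lt_sInf hT
  simp only [Set.mem_ofPred_eq, not_and, not_or, not_le] at this
  exact this hk

lemma exitTime_eq_of_forall_le_eq {k : ℕ} {ω ω' : Ω} (hk : 1 ≤ k)
    (hS : ∀ m ≤ k, S m ω = S m ω') (hT : exitTime S a b ω = k) : exitTime S a b ω' = k := by
  set C : Ω → Set ℕ := fun ω => {m | 1 ≤ m ∧ (S m ω ≤ -a ∨ b ≤ S m ω)}
  have hT : sInf (C ω) = k := hT
  have hC : ∀ m ≤ k, m ∈ C ω ↔ m ∈ C ω' := fun m hm => by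
    simp only [C, Set.mem_ofPred_eq, hS m hm]
  have hkω : k ∈ C ω := hT ▸ Nat.sInf_mem (Nat.nonempty_of_pos_sInf (hT ▸ hk))
  refine le_antisymm (Nat.sInf_le ((hC k le_rfl).1 hkω)) (le_csInf ⟨k, (hC k le_rfl).1 hkω⟩ ?_)
  intro m hm
  by_contra! hmk
  exact Nat.notMem_of_lt_sInf (hT ▸ hmk) ((hC m hmk.le).2 hm)

end ExitTime

section Samples

variable {Ω 𝒳 : Type*}

def firstSamples (X : ℕ → Ω → 𝒳) (k : ℕ) (ω : Ω) : Fin k → 𝒳 := fun j => X (j + 1) ω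

def sampleSum (L : 𝒳 → ℝ) (X : ℕ → Ω → 𝒳) (k : ℕ) (ω : Ω) : ℝ :=
  ∑ j ∈ Finset.range k, L (X (j + 1) ω)

variable {L : 𝒳 → ℝ} {X : ℕ → Ω → 𝒳}

lemma sampleSum_eq_sum_firstSamples (k : ℕ) (ω : Ω) :
    sampleSum L X k ω = ∑ j, L (firstSamples X k ω j) :=
  (Fin.sum_univ_eq_sum_range (fun j => L (X (j + 1) ω)) k).symm

lemma sampleSum_eq_of_firstSamples_eq {k m : ℕ} {ω ω' : Ω} (hm : m ≤ k)
    (h : firstSamples X k ω = firstSamples X k ω') : sampleSum L X m ω = sampleSum L X m ω' :=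
  Finset.sum_congr rfl fun j hj =>
    congrArg L (congrFun h ⟨j, (Finset.mem_range.1 hj).trans_le hm⟩)

variable [MeasurableSpace Ω] [MeasurableSpace 𝒳]

lemma measurable_sampleSum [MeasurableSingletonClass 𝒳] [Countable 𝒳]
    (hX : ∀ j, Measurable (X j)) (k : ℕ) : Measurable (sampleSum L X k) :=
  Finset.measurable_sum _ fun j _ => (measurable_of_countable L).comp (hX (j + 1))

lemma measurable_firstSamples (hX : ∀ j, Measurable (X j)) (k : ℕ) :
    Measurable (firstSamples X k) :=
  measurable_pi_lambda _ fun j => hX (j + 1)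

lemma measure_firstSamples_preimage_singleton [MeasurableSingletonClass 𝒳] (μ : Measure Ω)
    {p : 𝒳 → ℝ} (hind : iIndepFun X μ) (hmarg : ∀ j a, (μ (X j ⁻¹' {a})).toReal = p a)
    (k : ℕ) (w : Fin k → 𝒳) :
    μ (firstSamples X k ⁻¹' {w}) = ENNReal.ofReal (∏ j, p (w j)) := by
  have := hind.isProbabilityMeasure
  have hind' : iIndepFun (fun j : Fin k => X (j + 1)) μ :=
    hind.precomp fun i j h => Fin.ext (Nat.succ_injective h)
  have hcyl : firstSamples X k ⁻¹' {w}
      = ⋂ j ∈ (Finset.univ : Finset (Fin k)), X (j + 1) ⁻¹' {w j} := by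
    ext ω
    simp [firstSamples, funext_iff]
  have hX : ∀ j a, μ (X j ⁻¹' {a}) = ENNReal.ofReal (p a) := fun j a => by
    rw [← hmarg j a, ENNReal.ofReal_toReal (measure_ne_top _ _)]
  rw [hcyl, hind'.measure_inter_preimage_eq_mul _ fun j _ => measurableSet_singleton (w j),
    ENNReal.ofReal_prod_of_nonneg fun j _ => hmarg (j + 1) (w j) ▸ ENNReal.toReal_nonneg]
  simp only [hX]

lemma measure_le_exp_mul_of_sampleSum_log_div_le [Fintype 𝒳] [MeasurableSingletonClass 𝒳]
    {μ ν : Measure Ω} {p q : 𝒳 → ℝ} (hp : ∀ a, 0 < p a) (hq : ∀ a, 0 < q a)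
    (hX : ∀ j, Measurable (X j)) (hindμ : iIndepFun X μ) (hindν : iIndepFun X ν)
    (hmargμ : ∀ j a, (μ (X j ⁻¹' {a})).toReal = p a)
    (hmargν : ∀ j a, (ν (X j ⁻¹' {a})).toReal = q a)
    {k : ℕ} {E : Set Ω} {c : ℝ}
    (hE : ∀ ω ω', firstSamples X k ω = firstSamples X k ω' → ω ∈ E → ω' ∈ E)
    (hc : ∀ ω ∈ E, sampleSum (fun a => log (p a / q a)) X k ω ≤ c) :
    μ E ≤ ENNReal.ofReal (exp c) * ν E := by
  classical
  set W := firstSamples X k '' E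
  have hEW : E = firstSamples X k ⁻¹' W :=
    (Set.subset_preimage_image _ _).antisymm fun ω' ⟨ω, hω, h⟩ => hE ω ω' h hω
  have hsum : ∀ ρ : Measure Ω, ρ E = ∑ w ∈ W.toFinset, ρ (firstSamples X k ⁻¹' {w}) := fun ρ => by
    rw [sum_measure_preimage_singleton _ fun w _ =>
      measurable_firstSamples hX k (measurableSet_singleton w), Set.coe_toFinset, ← hEW]
  rw [hsum μ, hsum ν, Finset.mul_sum]
  gcongr with w hw
  obtain ⟨ω, hω, rfl⟩ := Set.mem_toFinset.1 hw
  rw [measure_firstSamples_preimage_singleton μ hindμ hmargμ,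
    measure_firstSamples_preimage_singleton ν hindν hmargν, ← ENNReal.ofReal_mul (exp_pos c).le]
  refine ENNReal.ofReal_le_ofReal ?_
  calc ∏ j, p (firstSamples X k ω j)
      = exp (sampleSum (fun a => log (p a / q a)) X k ω) * ∏ j, q (firstSamples X k ω j) := by
        rw [sampleSum_eq_sum_firstSamples, exp_sum, ← Finset.prod_mul_distrib]
        refine Finset.prod_congr rfl fun j _ => ?_
        rw [exp_log (div_pos (hp _) (hq _)), div_mul_cancel₀ _ (hq _).ne']
    _ ≤ exp c * ∏ j, q (firstSamples X k ω j) := by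
        gcongr
        · exact Finset.prod_nonneg fun j _ => (hq _).le
        · exact hc ω hω

theorem measureReal_sampleSum_exitTime_le_exp [Fintype 𝒳] [MeasurableSingletonClass 𝒳]
    {μ ν : Measure Ω} [IsProbabilityMeasure μ] [IsProbabilityMeasure ν]
    {p q : 𝒳 → ℝ} (hp : ∀ a, 0 < p a) (hq : ∀ a, 0 < q a)
    (hX : ∀ j, Measurable (X j)) (hindμ : iIndepFun X μ) (hindν : iIndepFun X ν)
    (hmargμ : ∀ j a, (μ (X j ⁻¹' {a})).toReal = p a)
    (hmargν : ∀ j a, (ν (X j ⁻¹' {a})).toReal = q a) (a b : ℝ) :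
    μ.real {ω | sampleSum (fun x => log (p x / q x)) X
      (exitTime (sampleSum (fun x => log (p x / q x)) X) a b ω) ω ≤ -a} ≤ exp (-a) := by
  set S := sampleSum (fun x => log (p x / q x)) X
  by_cases ha : 0 < a
  swap
  · exact measureReal_le_one.trans (one_le_exp (by linarith))
  set T := exitTime S a b
  set E : ℕ → Set Ω := fun k => {ω | T ω = k ∧ S k ω ≤ -a}
  have hunion : {ω | S (T ω) ω ≤ -a} = ⋃ k, E k := by ext; simp [E]
  have hmeas : ∀ k, MeasurableSet (E k) := fun k =>
    (measurable_exitTime (measurable_sampleSum hX) (measurableSet_singleton k)).inter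
      (measurableSet_le (measurable_sampleSum hX k) measurable_const)
  have hdisj : Pairwise (Function.onFun Disjoint E) := fun k l hkl =>
    Set.disjoint_left.2 fun ω hk hl => hkl (hk.1.symm.trans hl.1)
  -- `E k` is decided by the first `k` samples, on which the likelihood ratio is at most `e^{-a}`.
  have hE : ∀ k, μ (E k) ≤ ENNReal.ofReal (exp (-a)) * ν (E k) := fun k =>
    measure_le_exp_mul_of_sampleSum_log_div_le hp hq hX hindμ hindν hmargμ hmargν
      (fun ω ω' h ⟨hT, hS⟩ => by
        have hk : 1 ≤ k := Nat.one_le_iff_ne_zero.2 fun hk0 => by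
          subst hk0
          simp only [S, sampleSum, Finset.range_zero, Finset.sum_empty] at hS
          linarith
        exact ⟨exitTime_eq_of_forall_le_eq hk (fun m hm => sampleSum_eq_of_firstSamples_eq hm h) hT,
          (sampleSum_eq_of_firstSamples_eq le_rfl h).symm.trans_le hS⟩)
      fun ω hω => hω.2
  have hμ : μ {ω | S (T ω) ω ≤ -a} ≤ ENNReal.ofReal (exp (-a)) :=
    calc μ {ω | S (T ω) ω ≤ -a} = ∑' k, μ (E k) := by rw [hunion, measure_iUnion hdisj hmeas]
      _ ≤ ∑' k, ENNReal.ofReal (exp (-a)) * ν (E k) := ENNReal.tsum_le_tsum hE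
      _ = ENNReal.ofReal (exp (-a)) * ν (⋃ k, E k) := by
        rw [ENNReal.tsum_mul_left, measure_iUnion hdisj hmeas]
      _ ≤ ENNReal.ofReal (exp (-a)) := mul_le_of_le_one_right' prob_le_one
  exact ENNReal.toReal_le_of_le_ofReal (exp_pos _).le hμ

end Samples

section ExpectedSampleSize

variable {Ω 𝒳 : Type*} [MeasurableSpace Ω] [MeasurableSpace 𝒳] {X : ℕ → Ω → 𝒳}

lemma integral_comp_eq_sum [Fintype 𝒳] [MeasurableSingletonClass 𝒳] {μ : Measure Ω}
    [IsFiniteMeasure μ] {Y : Ω → 𝒳} (hY : Measurable Y) {p : 𝒳 → ℝ}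
    (hmarg : ∀ a, (μ (Y ⁻¹' {a})).toReal = p a)
    (g : 𝒳 → ℝ) : ∫ ω, g (Y ω) ∂μ = ∑ a, p a * g a := by
  rw [← integral_map hY.aemeasurable (measurable_of_countable g).aestronglyMeasurable,
    integral_fintype .of_finite]
  refine Finset.sum_congr rfl fun a _ => ?_
  rw [smul_eq_mul, measureReal_def, Measure.map_apply hY (measurableSet_singleton a), hmarg a]

theorem exists_measureReal_sampleSum_le_le_pow [Fintype 𝒳] [MeasurableSingletonClass 𝒳]
    {μ : Measure Ω} [IsProbabilityMeasure μ] {p : 𝒳 → ℝ} (hX : ∀ j, Measurable (X j))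
    (hind : iIndepFun X μ) (hmarg : ∀ j a, (μ (X j ⁻¹' {a})).toReal = p a)
    (L : 𝒳 → ℝ) {a : ℝ} (ha : a < ∑ x, p x * L x) :
    ∃ r, 0 ≤ r ∧ r < 1 ∧ ∀ k : ℕ, μ.real {ω | sampleSum L X k ω ≤ k * a} ≤ r ^ k := by
  set d := ∑ x, p x * L x
  -- The `+ 1` keeps the variance proxy `c` below positive.
  set M := ∑ x, |L x| + 1
  have hLM : ∀ x, L x ∈ Set.Icc (-M) M := fun x => abs_le.1 <|
    (Finset.single_le_sum (fun y _ => abs_nonneg (L y)) (Finset.mem_univ x)).trans (by linarith)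
  have hM : 0 < M := by positivity
  set c : ℝ≥0 := (‖M - -M‖₊ / 2) ^ 2
  have hc : (c : ℝ) = M ^ 2 := by
    simp only [c, NNReal.coe_pow, NNReal.coe_div, coe_nnnorm, norm_eq_abs, sub_neg_eq_add,
      NNReal.coe_ofNat]
    rw [abs_of_pos (by linarith)]; ring
  have hsubG : ∀ i, HasSubgaussianMGF (fun ω => d - L (X (i + 1) ω)) c μ := fun i => by
    have hmean : μ[fun ω => L (X (i + 1) ω)] = d :=
      integral_comp_eq_sum (hX (i + 1)) (hmarg (i + 1)) L
    refine (hasSubgaussianMGF_of_mem_Icc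
      ((measurable_of_countable L).comp (hX (i + 1))).aemeasurable
      (ae_of_all _ fun ω => hLM _)).neg.congr (ae_of_all _ fun ω => ?_)
    simp [hmean]
  have hindY : iIndepFun (fun i ω => d - L (X (i + 1) ω)) μ :=
    (hind.precomp Nat.succ_injective).comp (fun _ x => d - L x) fun _ => measurable_of_countable _
  refine ⟨exp (-((d - a) ^ 2 / (2 * c))), (exp_pos _).le, exp_lt_one_iff.2 ?_, fun k => ?_⟩
  · have : 0 < (d - a) ^ 2 / (2 * c) := by rw [hc]; have := sub_pos.2 ha; positivity
    linarith
  rcases k.eq_zero_or_pos with rfl | hk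
  · simp [measureReal_le_one]
  have hset : {ω | sampleSum L X k ω ≤ k * a}
      = {ω | k * (d - a) ≤ ∑ i ∈ Finset.range k, (d - L (X (i + 1) ω))} := by
    ext ω
    simp only [Set.mem_ofPred_eq, sampleSum, Finset.sum_sub_distrib, Finset.sum_const,
      Finset.card_range, nsmul_eq_mul]
    constructor <;> intro h <;> linarith
  calc μ.real {ω | sampleSum L X k ω ≤ k * a}
      ≤ exp (-(k * (d - a)) ^ 2 / (2 * k * c)) := hset ▸
        HasSubgaussianMGF.measure_sum_range_ge_le_of_iIndepFun hindY (fun i _ => hsubG i)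
          (mul_nonneg k.cast_nonneg (sub_pos.2 ha).le)
    _ = exp (-((d - a) ^ 2 / (2 * c))) ^ k := by
        rw [← exp_nat_mul]
        congr 1
        field_simp

lemma lintegral_natCast_eq_tsum_measure_lt {μ : Measure Ω} {T : Ω → ℕ} (hT : Measurable T) :
    ∫⁻ ω, (T ω : ℝ≥0∞) ∂μ = ∑' k, μ {ω | k < T ω} := by
  have hT' : ∀ k, MeasurableSet {ω | k < T ω} := fun k => hT measurableSet_Ioi
  have hpt : ∀ ω, (T ω : ℝ≥0∞) = ∑' k, {ω | k < T ω}.indicator 1 ω := fun ω => by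
    rw [tsum_eq_sum (s := Finset.range (T ω)) fun k hk =>
      Set.indicator_of_notMem (by simpa using hk) _]
    simp [Set.indicator_apply, Finset.filter_true_of_mem fun k hk => Finset.mem_range.1 hk]
  simp_rw [hpt]
  rw [lintegral_tsum fun k => (measurable_one.indicator (hT' k)).aemeasurable]
  exact tsum_congr fun k => lintegral_indicator_one (hT' k)

lemma integral_natCast_le_of_measureReal_lt_le_pow {μ : Measure Ω} [IsProbabilityMeasure μ]
    {T : Ω → ℕ} (hT : Measurable T) {r : ℝ} (hr0 : 0 ≤ r) (hr1 : r < 1) {m : ℕ}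
    (h : ∀ k ≥ m, μ.real {ω | k < T ω} ≤ r ^ k) :
    ∫ ω, (T ω : ℝ) ∂μ ≤ m + (1 - r)⁻¹ := by
  set g : ℕ → ℝ := fun k => (Finset.range m : Set ℕ).indicator 1 k + r ^ k
  have hg0 : ∀ k, 0 ≤ g k := fun k =>
    add_nonneg (Set.indicator_nonneg (fun _ _ => zero_le_one) _) (pow_nonneg hr0 k)
  have hg : HasSum g (m + (1 - r)⁻¹) := by
    refine HasSum.add ?_ (hasSum_geometric_of_lt_one hr0 hr1)
    convert hasSum_sum_of_ne_finset_zero (L := SummationFilter.unconditional ℕ)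
      (s := Finset.range m) fun k hk => Set.indicator_of_notMem hk (1 : ℕ → ℝ)
    rw [Finset.sum_indicator_subset _ subset_rfl]
    simp
  have hle : ∀ k, μ {ω | k < T ω} ≤ ENNReal.ofReal (g k) := fun k => by
    rw [← ofReal_measureReal]
    refine ENNReal.ofReal_le_ofReal ?_
    by_cases hk : k < m
    · simpa [g, hk] using measureReal_le_one.trans (le_add_of_nonneg_right (pow_nonneg hr0 k))
    · simpa [g, hk] using h k (not_lt.1 hk)
  have hlin : ∫⁻ ω, (T ω : ℝ≥0∞) ∂μ ≤ ENNReal.ofReal (m + (1 - r)⁻¹) := by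
    rw [lintegral_natCast_eq_tsum_measure_lt hT, ← hg.tsum_eq,
      ENNReal.ofReal_tsum_of_nonneg hg0 hg.summable]
    exact ENNReal.tsum_le_tsum hle
  rw [integral_eq_lintegral_of_nonneg_ae (ae_of_all _ fun _ => Nat.cast_nonneg _)
    (measurable_of_countable _ |>.comp hT).aestronglyMeasurable]
  simp only [ENNReal.ofReal_natCast]
  exact ENNReal.toReal_le_of_le_ofReal (by have := sub_pos.2 hr1; positivity) hlin

lemma exists_nat_forall_mul_add_lt {ρ : ℝ} (hρ : ρ < 1) (C : ℝ) :
    ∃ N : ℕ, ∀ n ≥ N, n * ρ + C < n := by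
  obtain ⟨N, hN⟩ := exists_nat_gt (C / (1 - ρ))
  refine ⟨N, fun n hn => ?_⟩
  have h1ρ : 0 < 1 - ρ := sub_pos.2 hρ
  have : C < n * (1 - ρ) := (div_lt_iff₀ h1ρ).1 (hN.trans_le (Nat.cast_le.2 hn))
  linarith

theorem exists_forall_integral_lt_of_sampleSum_le [Fintype 𝒳] [MeasurableSingletonClass 𝒳]
    {μ : Measure Ω} [IsProbabilityMeasure μ] {p : 𝒳 → ℝ} (hX : ∀ j, Measurable (X j))
    (hind : iIndepFun X μ) (hmarg : ∀ j a, (μ (X j ⁻¹' {a})).toReal = p a)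
    {L : 𝒳 → ℝ} {d τ : ℝ} (hd : d = ∑ x, p x * L x) (hτ : 0 < τ) (hτd : τ < d)
    {T : ℕ → Ω → ℕ} (hTmeas : ∀ n, Measurable (T n))
    (hT : ∀ n k ω, 1 ≤ k → k < T n ω → sampleSum L X k ω ≤ n * (d - τ)) :
    ∃ N : ℕ, ∀ n ≥ N, ∫ ω, (T n ω : ℝ) ∂μ < n := by
  obtain ⟨r, hr0, hr1, hr⟩ :=
    exists_measureReal_sampleSum_le_le_pow hX hind hmarg L (a := d - τ / 2) (by linarith)
  set ρ := (d - τ) / (d - τ / 2)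
  have hρ0 : 0 ≤ ρ := div_nonneg (by linarith) (by linarith)
  have hρ1 : ρ < 1 := (div_lt_one (by linarith)).2 (by linarith)
  -- Past `n ρ` steps, staying below `n (d - τ)` is a large deviation below the slope `d - τ / 2`.
  have hE : ∀ n, ∫ ω, (T n ω : ℝ) ∂μ ≤ n * ρ + 2 + (1 - r)⁻¹ := fun n => by
    have hm : ((⌈n * ρ⌉₊ + 1 : ℕ) : ℝ) ≤ n * ρ + 2 := by
      push_cast
      linarith [Nat.ceil_lt_add_one (mul_nonneg n.cast_nonneg hρ0)]
    refine (integral_natCast_le_of_measureReal_lt_le_pow (hTmeas n) hr0 hr1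
      (m := ⌈n * ρ⌉₊ + 1) fun k hk => ?_).trans (by linarith)
    have hnk : n * (d - τ) ≤ k * (d - τ / 2) := by
      have : n * ρ ≤ k := (Nat.le_ceil _).trans (by exact_mod_cast (Nat.le_succ _).trans hk)
      calc n * (d - τ) = n * ρ * (d - τ / 2) := by
            rw [mul_assoc, div_mul_cancel₀ _ (by linarith)]
        _ ≤ k * (d - τ / 2) := by gcongr; linarith
    refine (measureReal_mono fun ω hω => ?_).trans (hr k)
    exact (hT n k ω (by omega) hω).trans hnk
  obtain ⟨N, hN⟩ := exists_nat_forall_mul_add_lt hρ1 (2 + (1 - r)⁻¹)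
  exact ⟨N, fun n hn => (hE n).trans_lt (by linarith [hN n hn])⟩

end ExpectedSampleSize

theorem stmt19_general {𝒳 : Type*} [Fintype 𝒳] [MeasurableSpace 𝒳] [MeasurableSingletonClass 𝒳]
    (P0 P1 : 𝒳 → ℝ) (hP0pos : ∀ a, 0 < P0 a) (hP1pos : ∀ a, 0 < P1 a)
    (D D' : ℝ)
    (hD : D = ∑ a, P0 a * Real.log (P0 a / P1 a))
    (hD' : D' = ∑ a, P1 a * Real.log (P1 a / P0 a))
    (τ : ℝ) (hτ : 0 < τ) (hτD : τ < min D D')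
    {Ω : Type*} [MeasurableSpace Ω] (μ0 μ1 : Measure Ω)
    [IsProbabilityMeasure μ0] [IsProbabilityMeasure μ1]
    (X : ℕ → Ω → 𝒳) (hXmeas : ∀ j, Measurable (X j))
    (hindep0 : iIndepFun X μ0)
    (hindep1 : iIndepFun X μ1)
    (hmarg0 : ∀ j a, (μ0 (X j ⁻¹' {a})).toReal = P0 a)
    (hmarg1 : ∀ j a, (μ1 (X j ⁻¹' {a})).toReal = P1 a)
    (Z : ℕ → Ω → ℝ)
    (hZ : ∀ j ω, Z j ω = Real.log (P0 (X j ω) / P1 (X j ω)))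
    (S : ℕ → Ω → ℝ)
    (hS : ∀ k ω, S k ω = ∑ j ∈ Finset.range k, Z (j + 1) ω)
    (A B : ℕ → ℝ)
    (hA : ∀ n, A n = (n : ℝ) * (D' - τ)) (hB : ∀ n, B n = (n : ℝ) * (D - τ))
    (T : ℕ → Ω → ℕ)
    (hT : ∀ n ω, T n ω = sInf {k : ℕ | 1 ≤ k ∧ (S k ω ≤ -A n ∨ B n ≤ S k ω)}) :
    (∀ n : ℕ,
      (μ0 {ω | S (T n ω) ω ≤ -A n}).toReal ≤ Real.exp (-A n) ∧
      (μ1 {ω | B n ≤ S (T n ω) ω}).toReal ≤ Real.exp (-B n)) ∧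
    ∃ N : ℕ, ∀ n ≥ N,
      (∫ ω, (T n ω : ℝ) ∂μ0) < n ∧ (∫ ω, (T n ω : ℝ) ∂μ1) < n := by
  have hτD0 : τ < D := hτD.trans_le (min_le_left _ _)
  have hτD' : τ < D' := hτD.trans_le (min_le_right _ _)
  have hS0 : S = sampleSum (fun a => log (P0 a / P1 a)) X := by
    ext k ω
    exact (hS k ω).trans (Finset.sum_congr rfl fun j _ => hZ (j + 1) ω)
  have hS1 : (fun k ω => -S k ω) = sampleSum (fun a => log (P1 a / P0 a)) X := by
    ext k ω
    simp only [hS0, sampleSum, ← Finset.sum_neg_distrib, ← log_inv, inv_div]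
  have hT0 : ∀ n, T n = exitTime S (A n) (B n) := fun n => funext (hT n)
  have hT1 : ∀ n, T n = exitTime (fun k ω => -S k ω) (B n) (A n) :=
    fun n => (hT0 n).trans exitTime_neg.symm
  have hTmeas : ∀ n, Measurable (T n) := fun n =>
    hT0 n ▸ hS0 ▸ measurable_exitTime (measurable_sampleSum hXmeas)
  refine ⟨fun n => ⟨?_, ?_⟩, ?_⟩
  · rw [hT0, hS0]
    exact measureReal_sampleSum_exitTime_le_exp hP0pos hP1pos hXmeas hindep0 hindep1 hmarg0 hmarg1
      (A n) (B n)
  · have h := measureReal_sampleSum_exitTime_le_exp hP1pos hP0pos hXmeas hindep1 hindep0 hmarg1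
      hmarg0 (B n) (A n)
    rw [← hS1, ← hT1] at h
    simpa only [neg_le_neg_iff, measureReal_def] using h
  · obtain ⟨N0, hN0⟩ := exists_forall_integral_lt_of_sampleSum_le hXmeas hindep0 hmarg0
      (L := fun a => log (P0 a / P1 a)) hD hτ hτD0 hTmeas fun n k ω hk hkT => by
        rw [← hS0, ← hB]
        exact (mem_Ioo_of_lt_exitTime hk (hT0 n ▸ hkT)).2.le
    obtain ⟨N1, hN1⟩ := exists_forall_integral_lt_of_sampleSum_le hXmeas hindep1 hmarg1
      (L := fun a => log (P1 a / P0 a)) hD' hτ hτD' hTmeas fun n k ω hk hkT => by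
        rw [← hS1, ← hA]
        exact (mem_Ioo_of_lt_exitTime hk (hT1 n ▸ hkT)).2.le
    exact ⟨max N0 N1, fun n hn => ⟨hN0 n (le_of_max_le_left hn), hN1 n (le_of_max_le_right hn)⟩⟩

/-- Classical core of the achievability in Theorem 1: for i.i.d. samples from
mutually absolutely continuous distributions `P0, P1` on a finite alphabet,
the SPRT with thresholds `Aₙ = n(D' - τ)` and `Bₙ = n(D - τ)`, where
`D = D(P0∥P1)`, `D' = D(P1∥P0)` and `0 < τ < min(D, D')`, satisfies
`αₙ ≤ e^{-Aₙ}` and `βₙ ≤ e^{-Bₙ}` for all `n`, while `E₀[Tₙ] < n` and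
`E₁[Tₙ] < n` for all sufficiently large `n`. -/
theorem stmt19 {𝒳 : Type*} [Fintype 𝒳] [MeasurableSpace 𝒳] [MeasurableSingletonClass 𝒳]
    (P0 P1 : 𝒳 → ℝ) (hP0pos : ∀ a, 0 < P0 a) (hP1pos : ∀ a, 0 < P1 a)
    (hP0sum : ∑ a, P0 a = 1) (hP1sum : ∑ a, P1 a = 1)
    (D D' : ℝ)
    (hD : D = ∑ a, P0 a * Real.log (P0 a / P1 a))
    (hD' : D' = ∑ a, P1 a * Real.log (P1 a / P0 a))
    (τ : ℝ) (hτ : 0 < τ) (hτD : τ < min D D')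
    {Ω : Type*} [MeasurableSpace Ω] (μ0 μ1 : Measure Ω)
    [IsProbabilityMeasure μ0] [IsProbabilityMeasure μ1]
    (X : ℕ → Ω → 𝒳) (hXmeas : ∀ j, Measurable (X j))
    (hindep0 : iIndepFun X μ0)
    (hindep1 : iIndepFun X μ1)
    (hmarg0 : ∀ j a, (μ0 (X j ⁻¹' {a})).toReal = P0 a)
    (hmarg1 : ∀ j a, (μ1 (X j ⁻¹' {a})).toReal = P1 a)
    (Z : ℕ → Ω → ℝ)
    (hZ : ∀ j ω, Z j ω = Real.log (P0 (X j ω) / P1 (X j ω)))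
    (S : ℕ → Ω → ℝ)
    (hS : ∀ k ω, S k ω = ∑ j ∈ Finset.range k, Z (j + 1) ω)
    (A B : ℕ → ℝ)
    (hA : ∀ n, A n = (n : ℝ) * (D' - τ)) (hB : ∀ n, B n = (n : ℝ) * (D - τ))
    (T : ℕ → Ω → ℕ)
    (hT : ∀ n ω, T n ω = sInf {k : ℕ | 1 ≤ k ∧ (S k ω ≤ -A n ∨ B n ≤ S k ω)}) :
    (∀ n : ℕ,
      (μ0 {ω | S (T n ω) ω ≤ -A n}).toReal ≤ Real.exp (-A n) ∧
      (μ1 {ω | B n ≤ S (T n ω) ω}).toReal ≤ Real.exp (-B n)) ∧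
    ∃ N : ℕ, ∀ n ≥ N,
      (∫ ω, (T n ω : ℝ) ∂μ0) < n ∧ (∫ ω, (T n ω : ℝ) ∂μ1) < n :=
  stmt19_general P0 P1 hP0pos hP1pos D D' hD hD' τ hτ hτD μ0 μ1 X hXmeas hindep0 hindep1 hmarg0
    hmarg1 Z hZ S hS A B hA hB T hT
end
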